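/- Let w_1, …, w_n be independent Gaussian N(0, s²) random variables, let x ∈ ℝ^n be fixed, and set u = Σ_{k=1}^n w_k x_k. If f : ℝ → ℝ is Lipschitz with constant K, then for any two distinct indices i ≠ j, |E[f(u) w_i w_j]| ≤ √(2/π) · K · (|x_i| + |x_j|) · s³. In particular, since E[w_i w_j] = 0, the expectation E[f(u) w_i w_j] deviates from the mean-field factorization E[f(u)] E[w_i w_j] by at most √(2/π) K (|x_i| + |x_j|) s³. -/

import Mathlib

/-!
Split off the `j`-th summand: `u = V + w j * x j` with `V = ∑_{k ≠ j} w k * x k`. The pair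
`(V, w i)` is independent of the centred variable `w j`, so `E[f(V) w i w j] = 0` and
`E[f(u) w i w j] = E[(f(u) - f(V)) w i w j]`. Since `|f(u) - f(V)| ≤ K |x j| |w j|`, this is at
most `K |x j| E|w i| E[(w j)²] = √(2/π) K |x j| s³`.
-/

open MeasureTheory ProbabilityTheory NNReal Real Set

lemma integral_Ioi_mul_exp_neg_mul_sq {b : ℝ} (hb : 0 < b) :
    ∫ x in Ioi (0 : ℝ), x * exp (-b * x ^ 2) = (2 * b)⁻¹ := by
  have h := integral_rpow_mul_exp_neg_mul_rpow two_pos (by norm_num : (-1 : ℝ) < 1) hb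
  norm_num [Real.rpow_neg_one] at h
  simpa [neg_mul, mul_comm] using h

lemma integral_abs_gaussianReal (v : ℝ≥0) :
    ∫ x, |x| ∂gaussianReal 0 v = √(2 / π) * √v := by
  rcases eq_or_ne v 0 with rfl | hv
  · simp
  have hv' : (0 : ℝ) < v := by positivity
  have hpdf x : gaussianPDFReal 0 v x • |x|
      = (√(2 * π * v))⁻¹ * (|x| * exp (-(2 * (v : ℝ))⁻¹ * |x| ^ 2)) := by
    simp only [gaussianPDFReal, smul_eq_mul, sq_abs, sub_zero]
    rw [show -x ^ 2 / (2 * v) = -(2 * (v : ℝ))⁻¹ * x ^ 2 by ring]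
    ring
  simp_rw [integral_gaussianReal_eq_integral_smul hv, hpdf]
  rw [integral_const_mul, integral_comp_abs (f := fun t => t * exp (-(2 * (v : ℝ))⁻¹ * t ^ 2)),
    integral_Ioi_mul_exp_neg_mul_sq (inv_pos.2 (mul_pos two_pos hv')),
    show (2 : ℝ) * (2 * (2 * (v : ℝ))⁻¹)⁻¹ = √((2 * v) ^ 2) by
      rw [sqrt_sq (by positivity)]; field_simp,
    ← Real.sqrt_inv, ← sqrt_mul (by positivity), ← sqrt_mul (by positivity)]
  congr 1
  field_simp

lemma integral_sq_gaussianReal (v : ℝ≥0) : ∫ x, x ^ 2 ∂gaussianReal 0 v = v := by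
  rw [← variance_fun_id_gaussianReal (μ := 0) (v := v), variance_eq_integral aemeasurable_id',
    integral_id_gaussianReal]
  simp

namespace ProbabilityTheory

variable {Ω : Type*} [MeasurableSpace Ω] {P : Measure Ω}

lemma HasLaw.integrable_comp {𝓧 E : Type*} [MeasurableSpace 𝓧] [NormedAddCommGroup E]
    {μ : Measure 𝓧} {X : Ω → 𝓧} (hX : HasLaw X μ P) {g : 𝓧 → E} (hg : Integrable g μ) :
    Integrable (fun ω => g (X ω)) P := by
  rw [← hX.map_eq] at hg
  exact (integrable_map_measure hg.aestronglyMeasurable hX.aemeasurable).1 hg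

lemma iIndepFun.indepFun_sum_erase_prodMk {ι : Type*} [Fintype ι] [DecidableEq ι]
    {w : ι → Ω → ℝ} (hw : iIndepFun w P) (hmeas : ∀ k, Measurable (w k)) (a : ι → ℝ)
    {i j : ι} (hij : i ≠ j) :
    IndepFun (fun ω => (∑ k ∈ Finset.univ.erase j, w k ω * a k, w i ω)) (w j) P := by
  have hi : i ∈ Finset.univ.erase j := Finset.mem_erase.2 ⟨hij, Finset.mem_univ i⟩
  have h := (hw.indepFun_finset (Finset.univ.erase j) {j} (by simp) hmeas).comp
    (φ := fun y : Finset.univ.erase j → ℝ => (∑ k, y k * a k, y ⟨i, hi⟩))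
    (ψ := fun y : ({j} : Finset ι) → ℝ => y ⟨j, Finset.mem_singleton_self j⟩)
    (by fun_prop) (measurable_pi_apply (X := fun _ : ({j} : Finset ι) => ℝ) _)
  convert h using 1
  · ext ω
    · exact (Finset.sum_coe_sort (Finset.univ.erase j) fun k => w k ω * a k).symm
    · rfl
  · rfl

end ProbabilityTheory

lemma LipschitzWith.abs_integral_comp_add_mul_mul_le {Ω : Type*} [MeasurableSpace Ω]
    {P : Measure Ω} {f : ℝ → ℝ} {K : ℝ≥0} (hf : LipschitzWith K f)
    {V X Y : Ω → ℝ} (hV : Measurable V) (hX : Measurable X) (hY : Measurable Y)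
    (hindep : IndepFun (fun ω => (V ω, X ω)) Y P) (hX_int : Integrable X P)
    (hY_int : Integrable (fun ω => Y ω ^ 2) P) (hY_mean : ∫ ω, Y ω ∂P = 0) (c : ℝ) :
    |∫ ω, f (V ω + Y ω * c) * (X ω * Y ω) ∂P|
      ≤ K * |c| * ((∫ ω, |X ω| ∂P) * ∫ ω, Y ω ^ 2 ∂P) := by
  have hfc : Continuous f := hf.continuous
  set D := fun ω => (f (V ω + Y ω * c) - f (V ω)) * (X ω * Y ω)
  have hXY : IndepFun (fun ω => |X ω|) (fun ω => Y ω ^ 2) P :=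
    (hindep.comp (measurable_abs.comp measurable_snd) (measurable_id.pow_const 2) :)
  have hdom_int : Integrable (fun ω => |X ω| * Y ω ^ 2) P := hXY.integrable_mul hX_int.abs hY_int
  have hD_le ω : |D ω| ≤ K * |c| * (|X ω| * Y ω ^ 2) := by
    have hlip := hf.dist_le_mul (V ω + Y ω * c) (V ω)
    rw [Real.dist_eq, Real.dist_eq, add_sub_cancel_left, abs_mul] at hlip
    calc |D ω| = |f (V ω + Y ω * c) - f (V ω)| * (|X ω| * |Y ω|) := by simp only [D, abs_mul]
      _ ≤ K * (|Y ω| * |c|) * (|X ω| * |Y ω|) := by gcongr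
      _ = K * |c| * (|X ω| * Y ω ^ 2) := by rw [← sq_abs (Y ω)]; ring
  have hD_int : Integrable D P := (hdom_int.const_mul _).mono' (by fun_prop)
    (ae_of_all _ fun ω => (Real.norm_eq_abs _).trans_le (hD_le ω))
  have hD_bound : |∫ ω, D ω ∂P| ≤ K * |c| * ((∫ ω, |X ω| ∂P) * ∫ ω, Y ω ^ 2 ∂P) :=
    calc |∫ ω, D ω ∂P| ≤ ∫ ω, |D ω| ∂P := abs_integral_le_integral_abs
      _ ≤ ∫ ω, K * |c| * (|X ω| * Y ω ^ 2) ∂P :=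
        integral_mono hD_int.abs (hdom_int.const_mul _) hD_le
      _ = _ := by
        rw [integral_const_mul, hXY.integral_fun_mul_eq_mul_integral (by fun_prop) (by fun_prop)]
  have hfVX : IndepFun (fun ω => f (V ω) * X ω) Y P :=
    (hindep.comp (by fun_prop : Measurable fun p : ℝ × ℝ => f p.1 * p.2) measurable_id :)
  have hfV_zero : ∫ ω, f (V ω) * (X ω * Y ω) ∂P = 0 := by
    simp_rw [← mul_assoc]
    rw [hfVX.integral_fun_mul_eq_mul_integral (by fun_prop) (by fun_prop), hY_mean, mul_zero]
  by_cases hfV_int : Integrable (fun ω => f (V ω) * (X ω * Y ω)) P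
  · rw [show (fun ω => f (V ω + Y ω * c) * (X ω * Y ω)) = fun ω => D ω + f (V ω) * (X ω * Y ω)
      by ext; ring, integral_add hD_int hfV_int, hfV_zero, add_zero]
    exact hD_bound
  -- otherwise the integrand is not integrable either, and its integral is the junk value `0`
  · have : ¬ Integrable (fun ω => f (V ω + Y ω * c) * (X ω * Y ω)) P := fun h =>
      hfV_int ((h.sub hD_int).congr (ae_of_all _ fun ω => by
        change f (V ω + Y ω * c) * (X ω * Y ω) - D ω = _
        simp only [D]; ring))
    rw [integral_undef this, abs_zero]
    exact (abs_nonneg _).trans hD_bound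

theorem self_averaging_offdiagonal_general
    {Ω : Type*} [MeasurableSpace Ω] (P : Measure Ω)
    (n : ℕ) (s : ℝ≥0) (w : Fin n → Ω → ℝ) (x : Fin n → ℝ)
    (hw_meas : ∀ k, Measurable (w k))
    (hw_law : ∀ k, Measure.map (w k) P = gaussianReal 0 (s ^ 2))
    (hindep : iIndepFun w P)
    (f : ℝ → ℝ) (K : ℝ≥0) (hf : LipschitzWith K f)
    (i j : Fin n) (hij : i ≠ j) :
    (∫ ω, w i ω * w j ω ∂P) = 0
    ∧ |∫ ω, f (∑ k, w k ω * x k) * (w i ω * w j ω) ∂P|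
        ≤ Real.sqrt (2 / Real.pi) * K * (|x i| + |x j|) * (s : ℝ) ^ 3
    ∧ |(∫ ω, f (∑ k, w k ω * x k) * (w i ω * w j ω) ∂P)
          - (∫ ω, f (∑ k, w k ω * x k) ∂P) * (∫ ω, w i ω * w j ω ∂P)|
        ≤ Real.sqrt (2 / Real.pi) * K * (|x i| + |x j|) * (s : ℝ) ^ 3 := by
  have hlaw k : HasLaw (w k) (gaussianReal 0 (s ^ 2)) P := ⟨(hw_meas k).aemeasurable, hw_law k⟩
  have hmean k : ∫ ω, w k ω ∂P = 0 := (hlaw k).integral_eq.trans integral_id_gaussianReal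
  have habs : ∫ ω, |w i ω| ∂P = √(2 / π) * s := by
    rw [← Function.comp_def, (hlaw i).integral_comp (by fun_prop), integral_abs_gaussianReal]
    simp
  have hsq : ∫ ω, w j ω ^ 2 ∂P = s ^ 2 := by
    rw [← Function.comp_def (fun y : ℝ => y ^ 2), (hlaw j).integral_comp (by fun_prop),
      integral_sq_gaussianReal]
    simp
  have hEij : ∫ ω, w i ω * w j ω ∂P = 0 := by
    rw [(hindep.indepFun hij).integral_fun_mul_eq_mul_integral (hw_meas i).aestronglyMeasurable
      (hw_meas j).aestronglyMeasurable, hmean j, mul_zero]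
  have hsplit ω : ∑ k, w k ω * x k = ∑ k ∈ Finset.univ.erase j, w k ω * x k + w j ω * x j :=
    (Finset.sum_erase_add _ _ (Finset.mem_univ j)).symm
  have hbound : |∫ ω, f (∑ k, w k ω * x k) * (w i ω * w j ω) ∂P|
      ≤ √(2 / π) * K * (|x i| + |x j|) * s ^ 3 := by
    simp only [hsplit]
    refine (hf.abs_integral_comp_add_mul_mul_le (by fun_prop) (hw_meas i) (hw_meas j)
      (hindep.indepFun_sum_erase_prodMk hw_meas x hij)
      ((hlaw i).integrable_comp ((memLp_id_gaussianReal 1).integrable le_rfl))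
      ((hlaw j).integrable_comp (memLp_id_gaussianReal' 2 (by simp)).integrable_sq)
      (hmean j) (x j)).trans ?_
    rw [habs, hsq]
    calc (K : ℝ) * |x j| * (√(2 / π) * s * s ^ 2) = √(2 / π) * K * |x j| * s ^ 3 := by ring
      _ ≤ √(2 / π) * K * (|x i| + |x j|) * s ^ 3 := by
        gcongr; exact le_add_of_nonneg_left (abs_nonneg _)
  refine ⟨hEij, hbound, ?_⟩
  rwa [hEij, mul_zero, sub_zero]

/-- **Self-averaging property, off-diagonal case.**
Let `w 1, …, w n` be independent `N(0, s²)` Gaussian random variables, `x ∈ ℝ^n` fixed,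
`u = ∑ k w k * x k`, and `f` Lipschitz with constant `K`.  Then for distinct indices
`i ≠ j`, `|E[f(u) w i w j]| ≤ √(2/π) K (|x i| + |x j|) s³`.  In particular, since
`E[w i w j] = 0`, the expectation `E[f(u) w i w j]` deviates from the mean-field
factorization `E[f(u)] E[w i w j]` by at most this bound. -/
theorem self_averaging_offdiagonal
    {Ω : Type*} [MeasurableSpace Ω] (P : Measure Ω) [IsProbabilityMeasure P]
    (n : ℕ) (s : ℝ≥0) (w : Fin n → Ω → ℝ) (x : Fin n → ℝ)
    (hw_meas : ∀ k, Measurable (w k))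
    (hw_law : ∀ k, Measure.map (w k) P = gaussianReal 0 (s ^ 2))
    (hindep : iIndepFun w P)
    (f : ℝ → ℝ) (K : ℝ≥0) (hf : LipschitzWith K f)
    (i j : Fin n) (hij : i ≠ j) :
    (∫ ω, w i ω * w j ω ∂P) = 0
    ∧ |∫ ω, f (∑ k, w k ω * x k) * (w i ω * w j ω) ∂P|
        ≤ Real.sqrt (2 / Real.pi) * K * (|x i| + |x j|) * (s : ℝ) ^ 3
    ∧ |(∫ ω, f (∑ k, w k ω * x k) * (w i ω * w j ω) ∂P)
          - (∫ ω, f (∑ k, w k ω * x k) ∂P) * (∫ ω, w i ω * w j ω ∂P)|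
        ≤ Real.sqrt (2 / Real.pi) * K * (|x i| + |x j|) * (s : ℝ) ^ 3 :=
  self_averaging_offdiagonal_general P n s w x hw_meas hw_law hindep f K hf i j hij
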